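/- Suppose V is infinite-dimensional. Then for every X ∈ 𝒢 and every natural number d there exists Y ∈ 𝒢 with dim(X/(X ∩ Y)) = dim(Y/(X ∩ Y)) = d, so that the graph distance between X and Y in the Grassmann graph equals d; consequently, every connected component of the Grassmann graph on 𝒢 has infinite diameter. -/

import Mathlib

open Submodule

/-- `X` belongs to the Grassmannian 𝒢: `X` is isomorphic (as a `K`-vector space)
to the quotient `V ⧸ X`, equivalently to one (hence every) complement of `X`. -/
def InG (K V : Type*) [DivisionRing K] [AddCommGroup V] [Module K V]
    (X : Submodule K V) : Prop :=
  Nonempty (X ≃ₗ[K] (V ⧸ X))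

/-- `quotRank K V A B` is the dimension of the quotient space `B / (A ∩ B)`,
where `A ∩ B` is viewed as a subspace of `B`.  For `A ≤ B` this is `dim (B/A)`. -/
noncomputable def quotRank (K V : Type*) [DivisionRing K] [AddCommGroup V] [Module K V]
    (A B : Submodule K V) : Cardinal :=
  Module.rank K (↥B ⧸ (A.comap B.subtype))

/-- `X` and `Y` are adjacent: `dim ((X+Y)/X) = dim ((X+Y)/Y) = 1`. -/
def Adjacent (K V : Type*) [DivisionRing K] [AddCommGroup V] [Module K V]
    (X Y : Submodule K V) : Prop :=
  quotRank K V X (X ⊔ Y) = 1 ∧ quotRank K V Y (X ⊔ Y) = 1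

/-- The distant graph on 𝒢: vertices are the elements of 𝒢, edges the pairs of
(distinct) complementary subspaces. -/
def distantGraph (K V : Type*) [DivisionRing K] [AddCommGroup V] [Module K V] :
    SimpleGraph {X : Submodule K V // InG K V X} where
  Adj X Y := X ≠ Y ∧ IsCompl X.1 Y.1
  symm := ⟨fun _ _ h => ⟨h.1.symm, h.2.symm⟩⟩
  loopless := ⟨fun _ h => h.1 rfl⟩

/-- The Grassmann graph on 𝒢: vertices are the elements of 𝒢, edges the pairs of
adjacent subspaces. -/
def grassmannGraph (K V : Type*) [DivisionRing K] [AddCommGroup V] [Module K V] :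
    SimpleGraph {X : Submodule K V // InG K V X} where
  Adj X Y := Adjacent K V X.1 Y.1
  symm := by
    constructor
    intro X Y h
    obtain ⟨h1, h2⟩ := h
    refine ⟨?_, ?_⟩ <;> rw [sup_comm]
    exacts [h2, h1]
  loopless := by
    constructor
    intro X h
    obtain ⟨h1, -⟩ := h
    rw [quotRank, sup_idem, comap_subtype_self] at h1
    have : Subsingleton (↥X.1 ⧸ (⊤ : Submodule K ↥X.1)) :=
      Submodule.Quotient.subsingleton_iff.mpr rfl
    rw [rank_subsingleton'] at h1
    exact zero_ne_one h1

/-!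
Along an edge `A ~ C` of the Grassmann graph, `dim X/(A ∩ X) ≤ dim C/(A ∩ C) + dim X/(C ∩ X)`
with `dim C/(A ∩ C) ≤ 1`, so `dim Y/(X ∩ Y)` is a lower bound for the graph distance from `X`
to `Y`. For the upper bound, extend a basis `A` of `X` to a basis `B` of `V`. Then `B \ A` spans
a complement of `X`, so `X ≅ V/X` means `#A = #(B \ A)`, and both are infinite because `V` is
infinite-dimensional. Trading `d` vectors of `A` one at a time for `d` vectors of `B \ A` keeps
both cardinalities, hence stays in `𝒢`, and gives a path of length `d` from `X` to a subspace `Y`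
with `dim X/(X ∩ Y) = dim Y/(X ∩ Y) = d`.
-/

open Cardinal Set

section QuotRank

variable {K V : Type*} [DivisionRing K] [AddCommGroup V] [Module K V]

theorem quotRank_eq_rank_map (A B : Submodule K V) :
    quotRank K V A B = Module.rank K (B.map A.mkQ) := by
  have hker : LinearMap.ker (A.mkQ ∘ₗ B.subtype) = A.comap B.subtype := by
    rw [LinearMap.ker_comp, ker_mkQ]
  have hrange : LinearMap.range (A.mkQ ∘ₗ B.subtype) = B.map A.mkQ := by
    rw [LinearMap.range_comp, range_subtype]
  exact ((quotEquivOfEq _ _ hker.symm).trans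
    ((A.mkQ ∘ₗ B.subtype).quotKerEquivRange.trans (LinearEquiv.ofEq _ _ hrange))).rank_eq

theorem quotRank_self (A : Submodule K V) : quotRank K V A A = 0 := by
  rw [quotRank_eq_rank_map, mkQ_map_self, rank_bot]

theorem quotRank_eq_rank_of_le_sup {A B C : Submodule K V} (hCB : C ≤ B) (hBAC : B ≤ A ⊔ C)
    (hAC : Disjoint A C) : quotRank K V A B = Module.rank K C := by
  have hmap : B.map A.mkQ = C.map A.mkQ := by
    refine le_antisymm ?_ (map_mono hCB)
    simpa [Submodule.map_sup, mkQ_map_self] using map_mono (f := A.mkQ) hBAC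
  have hinj : Function.Injective (A.mkQ ∘ₗ C.subtype) := by
    rw [← LinearMap.ker_eq_bot, LinearMap.ker_comp, ker_mkQ]
    exact disjoint_iff_comap_eq_bot.mp hAC.symm
  rw [quotRank_eq_rank_map, hmap, ← rank_range_of_injective _ hinj,
    LinearMap.range_comp, range_subtype]

theorem quotRank_le_add (A C X : Submodule K V) :
    quotRank K V A X ≤ quotRank K V A C + quotRank K V C X := by
  obtain ⟨D, hD⟩ := (C ⊓ X).exists_isCompl
  -- `D ⊓ X` is a complement of `C ⊓ X` in `X`, so its dimension is `quotRank C X`.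
  have hX : X ≤ C ⊔ D ⊓ X :=
    calc X = (C ⊓ X ⊔ D) ⊓ X := by rw [hD.sup_eq_top, top_inf_eq]
      _ = C ⊓ X ⊔ D ⊓ X := sup_inf_assoc_of_le _ inf_le_right
      _ ≤ C ⊔ D ⊓ X := sup_le_sup_right inf_le_left _
  have hCD : Disjoint C (D ⊓ X) := by
    rw [disjoint_iff, ← hD.inf_eq_bot]
    ac_rfl
  rw [quotRank_eq_rank_of_le_sup inf_le_right hX hCD, quotRank_eq_rank_map,
    quotRank_eq_rank_map]
  calc Module.rank K (X.map A.mkQ) ≤ Module.rank K ((C ⊔ D ⊓ X).map A.mkQ) :=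
        rank_mono (map_mono hX)
    _ ≤ Module.rank K (C.map A.mkQ) + Module.rank K ((D ⊓ X).map A.mkQ) := by
        rw [Submodule.map_sup]
        exact rank_add_le_rank_add_rank _ _
    _ ≤ Module.rank K (C.map A.mkQ) + Module.rank K ↥(D ⊓ X) :=
        add_le_add le_rfl (rank_map_le _ _)

theorem Adjacent.quotRank_le_one {A C : Submodule K V} (h : Adjacent K V A C) :
    quotRank K V A C ≤ 1 := by
  rw [← h.1, quotRank_eq_rank_map, quotRank_eq_rank_map]
  exact rank_mono (map_mono le_sup_right)

theorem quotRank_le_length {X Y : {X : Submodule K V // InG K V X}}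
    (p : (grassmannGraph K V).Walk X Y) : quotRank K V X.1 Y.1 ≤ p.length := by
  induction p with
  | nil => simp [quotRank_self]
  | @cons X Z Y hXZ p ih =>
    calc quotRank K V X.1 Y.1 ≤ quotRank K V X.1 Z.1 + quotRank K V Z.1 Y.1 :=
          quotRank_le_add _ _ _
      _ ≤ 1 + p.length := add_le_add hXZ.quotRank_le_one ih
      _ = (p.cons hXZ).length := by simp [add_comm]

theorem dist_eq_length_of_quotRank_eq {X Y : {X : Submodule K V // InG K V X}}
    (p : (grassmannGraph K V).Walk X Y) (h : quotRank K V X.1 Y.1 = p.length) :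
    (grassmannGraph K V).dist X Y = p.length := by
  refine le_antisymm (SimpleGraph.dist_le p) ?_
  obtain ⟨q, hq⟩ := p.reachable.exists_walk_length_eq_dist
  rw [← hq]
  exact_mod_cast h ▸ quotRank_le_length q

end QuotRank

section Span

variable {K V : Type*} [DivisionRing K] [AddCommGroup V] [Module K V]

theorem quotRank_span_eq_mk_sdiff {s t : Set V} (hst : LinearIndepOn K id (s ∪ t)) :
    quotRank K V (span K s) (span K t) = #(t \ s : Set V) := by
  have hind : LinearIndepOn K id (s ∪ t \ s) := by rwa [union_sdiff_self]
  rw [quotRank_eq_rank_of_le_sup (span_mono sdiff_subset) ?_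
    ((linearIndepOn_id_union_iff disjoint_sdiff_right).1 hind).2.2,
    rank_span_set (hind.mono subset_union_right)]
  rw [← span_union, union_sdiff_self]
  exact span_mono subset_union_right

theorem adjacent_span_iff {s t : Set V} (hst : LinearIndepOn K id (s ∪ t)) :
    Adjacent K V (span K s) (span K t) ↔ #(t \ s : Set V) = 1 ∧ #(s \ t : Set V) = 1 := by
  rw [Adjacent, ← span_union, quotRank_span_eq_mk_sdiff, quotRank_span_eq_mk_sdiff,
    union_sdiff_left, union_sdiff_right]
  · rwa [union_left_comm, union_self]
  · rwa [← union_assoc, union_self]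

theorem inG_span_iff {B s : Set V} (hB : LinearIndepOn K id B) (hBV : span K B = ⊤)
    (hs : s ⊆ B) : InG K V (span K s) ↔ #s = #(B \ s : Set V) := by
  have hcompl : IsCompl (span K s) (span K (B \ s)) :=
    ⟨((linearIndepOn_id_union_iff disjoint_sdiff_right).1 (by rwa [union_sdiff_cancel hs])).2.2,
      codisjoint_iff.2 (by rw [← span_union, union_sdiff_cancel hs, hBV])⟩
  rw [InG, Module.nonempty_linearEquiv_iff_rank_eq, (quotientEquivOfIsCompl _ _ hcompl).rank_eq,
    rank_span_set (hB.mono hs), rank_span_set (hB.mono sdiff_subset)]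

end Span

section Exchange

variable {α : Type*}

theorem Cardinal.mk_sdiff_union_of_finite {S s t : Set α} (hS : ℵ₀ ≤ #S) (hs : s.Finite)
    (ht : t.Finite) : #((S \ s) ∪ t : Set α) = #S := by
  refine le_antisymm ?_ ?_
  · calc #((S \ s) ∪ t : Set α) ≤ #(S \ s : Set α) + #t := mk_union_le _ _
      _ ≤ #S + #t := add_le_add (mk_le_mk_of_subset sdiff_subset) le_rfl
      _ = #S := add_eq_left hS (ht.lt_aleph0.le.trans hS)
  · have hle : #S ≤ #((S \ s) ∪ t : Set α) + #s :=
      (mk_le_mk_of_subset fun x hx => by by_cases x ∈ s <;> simp_all).trans (mk_union_le _ _)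
    rcases lt_or_ge #((S \ s) ∪ t : Set α) ℵ₀ with hfin | hinf
    · exact absurd (hle.trans_lt (add_lt_aleph0 hfin hs.lt_aleph0)) (not_lt.2 hS)
    · rwa [add_eq_left hinf (hs.lt_aleph0.le.trans hinf)] at hle

def exchange (A : Set α) (a c : ℕ → α) (k : ℕ) : Set α :=
  (A \ a '' Iio k) ∪ c '' Iio k

variable {A C : Set α} {a c : ℕ → α}

theorem exchange_zero : exchange A a c 0 = A := by
  simp [exchange]

theorem exchange_subset_union (hc : ∀ n, c n ∈ C) (k : ℕ) : exchange A a c k ⊆ A ∪ C := by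
  rintro x (⟨hx, -⟩ | ⟨n, -, rfl⟩)
  exacts [Or.inl hx, Or.inr (hc n)]

theorem union_sdiff_exchange (hAC : Disjoint A C) (ha : ∀ n, a n ∈ A) (hc : ∀ n, c n ∈ C)
    (k : ℕ) : (A ∪ C) \ exchange A a c k = exchange C c a k := by
  ext x
  simp only [exchange, mem_sdiff, mem_union, mem_image, mem_Iio]
  have := hAC.notMem_of_mem_left (a := x)
  grind

theorem exchange_sdiff_exchange_of_ge (hc : ∀ n, c n ∉ A) (hci : c.Injective) {k m : ℕ}
    (hkm : k ≤ m) : exchange A a c m \ exchange A a c k = c '' Ico k m := by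
  ext x
  simp only [exchange, mem_sdiff, mem_union, mem_image, mem_Iio, mem_Ico]
  grind

theorem exchange_sdiff_exchange_of_le (ha : ∀ n, a n ∈ A) (hc : ∀ n, c n ∉ A)
    (hai : a.Injective) {k m : ℕ} (hmk : m ≤ k) :
    exchange A a c m \ exchange A a c k = a '' Ico m k := by
  ext x
  simp only [exchange, mem_sdiff, mem_union, mem_image, mem_Iio, mem_Ico]
  grind

theorem mk_exchange (hA : ℵ₀ ≤ #A) (k : ℕ) : #(exchange A a c k) = #A :=
  mk_sdiff_union_of_finite hA ((finite_Iio k).image a) ((finite_Iio k).image c)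

theorem mk_image_Ico {f : ℕ → α} (hf : f.Injective) (k m : ℕ) :
    #(f '' Ico k m : Set α) = (m - k : ℕ) := by
  simpa using mk_image_eq_lift f (Ico k m) hf

end Exchange

theorem SimpleGraph.exists_walk_length_eq_of_adj_succ {W : Type*} {G : SimpleGraph W}
    {f : ℕ → W} (hf : ∀ k, G.Adj (f k) (f (k + 1))) (d : ℕ) :
    ∃ p : G.Walk (f 0) (f d), p.length = d := by
  induction d with
  | zero => exact ⟨.nil, rfl⟩
  | succ d ih =>
    obtain ⟨p, hp⟩ := ih
    exact ⟨p.concat (hf d), by rw [Walk.length_concat, hp]⟩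

section Grassmann

variable {K V : Type*} [DivisionRing K] [AddCommGroup V] [Module K V]

theorem exists_subset_basis_span_eq (X : Submodule K V) :
    ∃ A B : Set V, A ⊆ B ∧ span K A = X ∧ LinearIndepOn K id B ∧ span K B = ⊤ := by
  obtain ⟨A, hAX, -, hXA, hA⟩ :=
    exists_linearIndepOn_id_extension (linearIndepOn_empty K id) (empty_subset (X : Set V))
  obtain ⟨B, -, hAB, hVB, hB⟩ := exists_linearIndepOn_id_extension hA (subset_univ A)
  exact ⟨A, B, hAB, le_antisymm (span_le.2 hAX) (by simpa using hXA), hB,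
    eq_top_iff.2 fun v _ => hVB (mem_univ v)⟩

theorem infinite_of_span_eq_top (hV : ¬ FiniteDimensional K V) {B : Set V}
    (hBV : span K B = ⊤) : B.Infinite :=
  fun hB => hV (Module.finite_def.2 (hBV ▸ fg_span hB))

theorem exists_inG_dist_eq_of_basis {A B : Set V} (hAB : A ⊆ B) (hB : LinearIndepOn K id B)
    (hBV : span K B = ⊤) (hAinf : ℵ₀ ≤ #A) (hAC : #A = #(B \ A : Set V))
    (hX : InG K V (span K A)) (d : ℕ) :
    ∃ Y : Submodule K V, ∃ hY : InG K V Y,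
      quotRank K V Y (span K A) = d ∧ quotRank K V (span K A) Y = d ∧
      (grassmannGraph K V).Reachable ⟨span K A, hX⟩ ⟨Y, hY⟩ ∧
      (grassmannGraph K V).dist ⟨span K A, hX⟩ ⟨Y, hY⟩ = d := by
  set C := B \ A
  have hBAC : B = A ∪ C := (union_sdiff_cancel hAB).symm
  obtain ⟨a⟩ : Nonempty (ℕ ↪ A) := ⟨(infinite_coe_iff.1 (infinite_iff.2 hAinf)).natEmbedding⟩
  obtain ⟨c⟩ : Nonempty (ℕ ↪ C) :=
    ⟨(infinite_coe_iff.1 (infinite_iff.2 (hAC ▸ hAinf))).natEmbedding⟩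
  set E := exchange A (fun n => a n) (fun n => c n)
  have ha : ∀ n, (a n : V) ∈ A := fun n => (a n).2
  have hc : ∀ n, (c n : V) ∉ A := fun n => (c n).2.2
  have hai : Function.Injective fun n => (a n : V) := Subtype.val_injective.comp a.injective
  have hci : Function.Injective fun n => (c n : V) := Subtype.val_injective.comp c.injective
  have hEB : ∀ k, E k ⊆ B := fun k => hBAC ▸ exchange_subset_union (fun n => (c n).2) k
  have hE : ∀ k, InG K V (span K (E k)) := fun k => by
    rw [inG_span_iff hB hBV (hEB k), mk_exchange hAinf, hBAC,
      union_sdiff_exchange disjoint_sdiff_right ha (fun n => (c n).2),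
      mk_exchange (hAC ▸ hAinf), hAC]
  have hindep : ∀ k m, LinearIndepOn K id (E k ∪ E m) :=
    fun k m => hB.mono (union_subset (hEB k) (hEB m))
  have hadj : ∀ k,
      (grassmannGraph K V).Adj ⟨span K (E k), hE k⟩ ⟨span K (E (k + 1)), hE (k + 1)⟩ :=
    fun k => (adjacent_span_iff (hindep _ _)).2 <| by
      rw [exchange_sdiff_exchange_of_ge hc hci (k.le_add_right 1),
        exchange_sdiff_exchange_of_le ha hc hai (k.le_add_right 1), mk_image_Ico hci,
        mk_image_Ico hai, Nat.add_sub_cancel_left, Nat.cast_one]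
      exact ⟨rfl, rfl⟩
  have hE0 : E 0 = A := exchange_zero
  obtain ⟨p, hp⟩ := SimpleGraph.exists_walk_length_eq_of_adj_succ hadj d
  let q : (grassmannGraph K V).Walk ⟨span K A, hX⟩ ⟨span K (E d), hE d⟩ :=
    p.copy (Subtype.ext (congrArg (span K) hE0)) rfl
  have hXY : quotRank K V (span K A) (span K (E d)) = d := by
    rw [← hE0, quotRank_span_eq_mk_sdiff (hindep 0 d),
      exchange_sdiff_exchange_of_ge hc hci d.zero_le, mk_image_Ico hci, Nat.sub_zero]
  refine ⟨span K (E d), hE d, ?_, hXY, q.reachable, ?_⟩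
  · rw [← hE0, quotRank_span_eq_mk_sdiff (hindep d 0),
      exchange_sdiff_exchange_of_le ha hc hai d.zero_le, mk_image_Ico hai, Nat.sub_zero]
  · rw [dist_eq_length_of_quotRank_eq q (by rw [hXY, SimpleGraph.Walk.length_copy, hp]),
      SimpleGraph.Walk.length_copy, hp]

theorem exists_inG_dist_eq (hV : ¬ FiniteDimensional K V) {X : Submodule K V}
    (hX : InG K V X) (d : ℕ) :
    ∃ Y : Submodule K V, ∃ hY : InG K V Y, quotRank K V Y X = d ∧ quotRank K V X Y = d ∧
      (grassmannGraph K V).Reachable ⟨X, hX⟩ ⟨Y, hY⟩ ∧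
      (grassmannGraph K V).dist ⟨X, hX⟩ ⟨Y, hY⟩ = d := by
  obtain ⟨A, B, hAB, rfl, hB, hBV⟩ := exists_subset_basis_span_eq X
  have hAC : #A = #(B \ A : Set V) := (inG_span_iff hB hBV hAB).1 hX
  have hAinf : ℵ₀ ≤ #A := by
    by_contra! hfin
    refine infinite_of_span_eq_top hV hBV ?_
    rw [← union_sdiff_cancel hAB]
    exact (lt_aleph0_iff_set_finite.1 hfin).union (lt_aleph0_iff_set_finite.1 (hAC ▸ hfin))
  exact exists_inG_dist_eq_of_basis hAB hB hBV hAinf hAC hX d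

end Grassmann

/-- For `V` infinite-dimensional: for every `X ∈ 𝒢` and every `d : ℕ` there is
`Y ∈ 𝒢` with `dim (X/(X ∩ Y)) = dim (Y/(X ∩ Y)) = d`, whose graph distance from
`X` in the Grassmann graph equals `d`; consequently every connected component of
the Grassmann graph has infinite diameter. -/
theorem stmt_18 (K V : Type*) [DivisionRing K] [AddCommGroup V] [Module K V]
    (hV : ¬ FiniteDimensional K V) :
    (∀ X : Submodule K V, (hX : InG K V X) → ∀ d : ℕ,
      ∃ Y : Submodule K V, ∃ hY : InG K V Y,
        quotRank K V Y X = (d : ℕ) ∧ quotRank K V X Y = (d : ℕ) ∧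
        (grassmannGraph K V).dist ⟨X, hX⟩ ⟨Y, hY⟩ = d) ∧
    (∀ X : Submodule K V, (hX : InG K V X) → ∀ n : ℕ,
      ∃ Y : Submodule K V, ∃ hY : InG K V Y,
        (grassmannGraph K V).Reachable ⟨X, hX⟩ ⟨Y, hY⟩ ∧
        n ≤ (grassmannGraph K V).dist ⟨X, hX⟩ ⟨Y, hY⟩) := by
  refine ⟨fun X hX d => ?_, fun X hX n => ?_⟩
  · obtain ⟨Y, hY, hYX, hXY, -, hdist⟩ := exists_inG_dist_eq hV hX d
    exact ⟨Y, hY, hYX, hXY, hdist⟩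
  · obtain ⟨Y, hY, -, -, hreach, hdist⟩ := exists_inG_dist_eq hV hX n
    exact ⟨Y, hY, hreach, hdist.ge⟩
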